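/- arXiv:1205.5247 — 2 statements merged into one kernel-verified Lean document; each statement's English description precedes it below -/
import Mathlib

section
/- Let M be a matroid on a finite linearly ordered set E, A ⊆ E, and let e be externally active for A, i.e., e ∈ E \ A is the smallest element of some circuit of M contained in A ∪ {e}. Then there is a unique circuit C of M with smallest element e such that e ∈ C ⊆ (A \ Q_M(A)) ∪ {e}, where Q_M(A) = {x ∈ A : x is smallest in some circuit of M contained in A}. -/
open Set

/-- `e` is the smallest element of `C`. -/
def SmallestIn {α : Type*} [LinearOrder α] (e : α) (C : Set α) : Prop :=
  e ∈ C ∧ ∀ f ∈ C, e ≤ f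

/-- `C` is a circuit of `M`: a minimal dependent set. -/
def IsCircuit {α : Type*} (M : Matroid α) (C : Set α) : Prop :=
  ¬ M.Indep C ∧ ∀ x ∈ C, M.Indep (C \ {x})

/-- A cocircuit is a circuit of the dual matroid. -/
def IsCocircuit {α : Type*} (M : Matroid α) (C : Set α) : Prop :=
  IsCircuit M✶ C

/-- `P_M(A)`: elements outside `A` that are smallest in some cocircuit avoiding `A`. -/
def Pset {α : Type*} [LinearOrder α] (M : Matroid α) (A : Set α) : Set α :=
  {e | e ∉ A ∧ ∃ C, IsCocircuit M C ∧ C ⊆ Aᶜ ∧ SmallestIn e C}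

/-- `Q_M(A)`: elements of `A` that are smallest in some circuit contained in `A`. -/
def Qset {α : Type*} [LinearOrder α] (M : Matroid α) (A : Set α) : Set α :=
  {e | e ∈ A ∧ ∃ C, IsCircuit M C ∧ C ⊆ A ∧ SmallestIn e C}

/-- Externally active elements of `A`. -/
def ExtSet {α : Type*} [LinearOrder α] (M : Matroid α) (A : Set α) : Set α :=
  {e | e ∉ A ∧ ∃ C, IsCircuit M C ∧ C ⊆ A ∪ {e} ∧ SmallestIn e C}

/-- Internally active elements of `A`. -/
def IntSet {α : Type*} [LinearOrder α] (M : Matroid α) (A : Set α) : Set α :=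
  {e | e ∈ A ∧ ∃ C, IsCocircuit M C ∧ C ⊆ Aᶜ ∪ {e} ∧ SmallestIn e C}

/-- The rank of a set: the largest cardinality of an independent subset. -/
noncomputable def rk {α : Type*} (M : Matroid α) (A : Set α) : ℕ :=
  sSup (Set.ncard '' {I | I ⊆ A ∧ M.Indep I})

/-- Matroid perspective (strong-map / quotient condition, form (MP3)). -/
def Perspective {α : Type*} (M M' : Matroid α) : Prop :=
  ∀ C D : Set α, IsCircuit M C → IsCocircuit M' D → (C ∩ D).ncard ≠ 1

/-- Rank codrop of a subset in a matroid perspective. -/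
noncomputable def rcd {α : Type*} (M M' : Matroid α) (A : Set α) : ℕ :=
  ((rk M Set.univ : ℤ) - rk M' Set.univ - ((rk M A : ℤ) - rk M' A)).toNat

/-!
The circuit in question is the fundamental circuit of `e` with respect to `I := A \ Q_M(A)`.
The set `I` is independent, since the smallest element of a circuit inside `A` lies in `Q_M(A)`.
By downward induction along the order, every `a ∈ A` with `a > t` is spanned by the elements of
`I` above `t`: an element of `Q_M(A)` is spanned by the rest of a circuit of which it is the
smallest element. Applied to the circuit witnessing that `e` is externally active, this puts `e`
in the closure of `I ∩ (e, ∞)`, and the fundamental circuit of `e` into that set has smallest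
element `e`. Uniqueness is that of fundamental circuits.
-/

section

variable {α : Type*} {M : Matroid α} {A C : Set α}

lemma isCircuit_iff_isCircuit (hC : C ⊆ M.E) : IsCircuit M C ↔ M.IsCircuit C := by
  rw [Matroid.isCircuit_iff_dep_forall_sdiff_singleton_indep, IsCircuit, Matroid.not_indep_iff hC]

lemma SmallestIn.of_subset_insert [LinearOrder α] {e : α} (he : e ∈ C)
    (hC : C ⊆ insert e (Ioi e)) : SmallestIn e C :=
  ⟨he, fun _ hf => (hC hf).elim ge_of_eq le_of_lt⟩

variable [LinearOrder α] [Finite α]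

lemma exists_smallestIn (hC : C.Nonempty) : ∃ m, SmallestIn m C := by
  obtain ⟨m, hm, hmin⟩ := C.exists_min_image id (toFinite C) hC
  exact ⟨m, hm, hmin⟩

lemma indep_diff_Qset (hA : A ⊆ M.E) : M.Indep (A \ Qset M A) := by
  rw [Matroid.indep_iff_forall_subset_not_isCircuit (sdiff_subset.trans hA)]
  intro C hCI hC
  obtain ⟨m, hm⟩ := exists_smallestIn hC.nonempty
  have hCA : C ⊆ A := hCI.trans sdiff_subset
  exact (hCI hm.1).2
    ⟨hCA hm.1, C, (isCircuit_iff_isCircuit (hCA.trans hA)).2 hC, hCA, hm⟩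

lemma inter_Ioi_subset_closure_diff_Qset (hA : A ⊆ M.E) (t : α) :
    A ∩ Ioi t ⊆ M.closure ((A \ Qset M A) ∩ Ioi t) := by
  intro a
  induction a using WellFoundedGT.induction with
  | _ a ih =>
    rintro ⟨haA, hta⟩
    by_cases haQ : a ∈ Qset M A
    · obtain ⟨-, D, hD, hDA, haD, hmin⟩ := haQ
      have hD' := (isCircuit_iff_isCircuit (hDA.trans hA)).1 hD
      refine M.closure_subset_closure_of_subset_closure (fun b hb => ?_)
        (hD'.mem_closure_sdiff_singleton_of_mem haD)
      have hab : a < b := (hmin b hb.1).lt_of_ne (Ne.symm hb.2)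
      exact ih b hab ⟨hDA hb.1, hta.trans hab⟩
    · exact M.subset_closure _ (inter_subset_left.trans sdiff_subset |>.trans hA)
        ⟨⟨haA, haQ⟩, hta⟩

lemma mem_closure_diff_Qset_inter_Ioi {e : α} (he : e ∈ ExtSet M A) (hAe : insert e A ⊆ M.E) :
    e ∈ M.closure ((A \ Qset M A) ∩ Ioi e) := by
  obtain ⟨-, C, hC, hCA, heC, hmin⟩ := he
  have hC' := (isCircuit_iff_isCircuit (hCA.trans (union_singleton ▸ hAe))).1 hC
  refine M.closure_subset_closure_of_subset_closure (fun b hb => ?_)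
    (hC'.mem_closure_sdiff_singleton_of_mem heC)
  refine inter_Ioi_subset_closure_diff_Qset ((subset_insert e A).trans hAe) e ⟨?_, ?_⟩
  · exact (hCA hb.1).resolve_right hb.2
  · exact (hmin b hb.1).lt_of_ne (Ne.symm hb.2)

end

theorem externally_active_unique_circuit {α : Type*} [Fintype α] [LinearOrder α]
    (M : Matroid α) (hE : M.E = Set.univ) (A : Set α) (e : α)
    (he : e ∈ ExtSet M A) :
    ∃! C : Set α, IsCircuit M C ∧ SmallestIn e C ∧ C ⊆ (A \ Qset M A) ∪ {e} := by
  have hground : ∀ X : Set α, X ⊆ M.E := fun X => hE ▸ subset_univ X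
  set I := A \ Qset M A
  have hI : M.Indep I := indep_diff_Qset (hground A)
  have hIe : M.Indep (I ∩ Ioi e) := hI.subset inter_subset_left
  have hecl : e ∈ M.closure (I ∩ Ioi e) := mem_closure_diff_Qset_inter_Ioi he (hground _)
  have hC := hIe.fundCircuit_isCircuit hecl (fun h => lt_irrefl e h.2)
  have hCsub := M.fundCircuit_subset_insert e (I ∩ Ioi e)
  have hCI : M.fundCircuit e (I ∩ Ioi e) ⊆ insert e I :=
    hCsub.trans (insert_subset_insert inter_subset_left)
  refine ⟨M.fundCircuit e (I ∩ Ioi e), ⟨(isCircuit_iff_isCircuit (hground _)).2 hC,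
    .of_subset_insert (M.mem_fundCircuit e _) (hCsub.trans (insert_subset_insert
      inter_subset_right)), union_singleton ▸ hCI⟩, ?_⟩
  rintro C' ⟨hC', -, hC'I⟩
  rw [((isCircuit_iff_isCircuit (hground C')).1 hC').eq_fundCircuit_of_subset hI
    (union_singleton ▸ hC'I), hC.eq_fundCircuit_of_subset hI hCI]
end

section
/- Let M → M' be a matroid perspective on a finite linearly ordered set E. Let B ⊆ E be independent in M and spanning in M', and let A ∈ [B \ Int_{M'}(B), B ∪ Ext_M(B)] (i.e., B \ Int_{M'}(B) ⊆ A ⊆ B ∪ Ext_M(B)). Then Int_{M'}(A) = Int_{M'}(B) ∩ A and P_{M'}(A) = Int_{M'}(B) \ A. -/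
open Set

/-! Write `S(X)` (`ActiveSet`) for the set of elements `e` that are smallest in some cocircuit of
`M'` contained in `Xᶜ ∪ {e}`, so that `Int_{M'}(X) = S(X) ∩ X` and `P_{M'}(X) = S(X) \ X`; it
suffices to show `S(A) = S(B) ⊆ B`. Every cocircuit meets the spanning set `B`, whence `S(B) ⊆ B`.
A cocircuit witnessing `e ∈ S(B)` avoids `A \ {e}`: by the perspective condition it cannot meet a
circuit witnessing external activity in a single element. Conversely, `e ∈ S(X)` iff `e` is not in
the closure of `(X ∪ {x < e}) \ {e}`; every `b ∈ B \ A` lies in `S(A)`, and by the exchange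
property adding these elements to `A`, largest last, never brings `e` into the closure. -/

section Matroid

variable {α : Type*} {M : Matroid α} {C K X S : Set α} {e : α}

lemma isCircuit_iff_matroid_isCircuit (hE : M.E = univ) : IsCircuit M C ↔ M.IsCircuit C := by
  rw [Matroid.isCircuit_iff_dep_forall_sdiff_singleton_indep, Matroid.Dep, hE]
  simp only [IsCircuit, subset_univ, and_true]

lemma isCocircuit_iff_matroid_isCocircuit (hE : M.E = univ) : IsCocircuit M K ↔ M.IsCocircuit K :=
  isCircuit_iff_matroid_isCircuit (M := M✶) (by rw [Matroid.dual_ground, hE])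

lemma Matroid.IsCocircuit.notMem_closure (hK : M.IsCocircuit K) (heK : e ∈ K)
    (hKX : Disjoint K X) : e ∉ M.closure X := by
  intro he
  obtain ⟨C, hCX, hC, heC⟩ :=
    Matroid.exists_isCircuit_of_mem_closure he (hKX.notMem_of_mem_left heK)
  refine hC.inter_isCocircuit_ne_singleton hK (e := e) <|
    subset_antisymm (fun f ⟨hfC, hfK⟩ => ?_) (singleton_subset_iff.2 ⟨heC, heK⟩)
  rcases hCX hfC with rfl | hfX
  · rfl
  · exact absurd hfX (hKX.notMem_of_mem_left hfK)

lemma Matroid.exists_isCocircuit_of_notMem_closure (he : e ∈ M.E) (heX : e ∉ M.closure X) :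
    ∃ K, M.IsCocircuit K ∧ e ∈ K ∧ Disjoint K X := by
  obtain ⟨I, hI⟩ := M.exists_isBasis' X
  have hins : M.Indep (insert e I) := by
    rw [hI.indep.insert_indep_iff, hI.closure_eq_closure]
    exact Or.inl ⟨he, heX⟩
  obtain ⟨B, hB, hIB⟩ := hins.exists_isBase_superset
  have heB : e ∈ B := hIB (mem_insert e I)
  have heI : e ∉ I := fun heI =>
    heX (hI.closure_eq_closure ▸ M.subset_closure I hI.indep.subset_ground heI)
  refine ⟨M.E \ M.closure (B \ {e}), hB.compl_closure_sdiff_singleton_isCocircuit heB,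
    ⟨he, hB.indep.notMem_closure_sdiff_of_mem heB⟩, Set.disjoint_left.2 ?_⟩
  rintro f ⟨hfE, hfcl⟩ hfX
  refine hfcl (M.closure_subset_closure ?_ (hI.isBasis_inter_ground.subset_closure ⟨hfX, hfE⟩))
  exact subset_sdiff_singleton ((subset_insert e I).trans hIB) heI

lemma Matroid.notMem_closure_iff_exists_isCocircuit (he : e ∈ M.E) :
    e ∉ M.closure X ↔ ∃ K, M.IsCocircuit K ∧ e ∈ K ∧ Disjoint K X :=
  ⟨M.exists_isCocircuit_of_notMem_closure he, fun ⟨_, hK, heK, hKX⟩ => hK.notMem_closure heK hKX⟩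

lemma Matroid.Spanning.inter_isCocircuit_nonempty (hS : M.Spanning S) (hK : M.IsCocircuit K) :
    (K ∩ S).Nonempty := by
  obtain ⟨B, hB, hBS⟩ := hS.exists_isBase_subset
  exact ((Matroid.isCocircuit_iff_minimal.1 hK).prop B hB).mono (inter_subset_inter_right K hBS)

lemma Matroid.notMem_closure_union_of_forall_notMem_closure [LinearOrder α]
    (heX : e ∉ M.closure X) (s : Finset α)
    (hs : ∀ b ∈ s, b ∉ M.closure (insert e (X ∪ Iio b))) : e ∉ M.closure (X ∪ s) := by
  classical
  induction s using Finset.induction_on_max with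
  | empty => simpa using heX
  | insert a s hlt ih =>
    intro hcl
    have hes : e ∉ M.closure (X ∪ s) := ih fun b hb => hs b (Finset.mem_insert_of_mem hb)
    rw [Finset.coe_insert, union_insert] at hcl
    refine hs a (Finset.mem_insert_self a s) <| M.closure_subset_closure ?_
      (M.closure_exchange ⟨hcl, hes⟩).1
    exact insert_subset_insert (union_subset_union_right X hlt)

end Matroid

section ActiveSet

variable {α : Type*} [LinearOrder α] {M M' : Matroid α} {A B K X : Set α} {e : α}

def ActiveSet (M : Matroid α) (X : Set α) : Set α :=
  {e | ∃ K, IsCocircuit M K ∧ K ⊆ Xᶜ ∪ {e} ∧ SmallestIn e K}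

lemma intSet_eq_activeSet_inter : IntSet M X = ActiveSet M X ∩ X := by
  ext e
  simp only [IntSet, ActiveSet, mem_ofPred_eq, mem_inter_iff]
  tauto

lemma pset_eq_activeSet_diff : Pset M X = ActiveSet M X \ X := by
  ext e
  simp only [Pset, ActiveSet, mem_ofPred_eq, mem_sdiff]
  constructor
  · rintro ⟨heX, K, hK, hKX, he⟩
    exact ⟨⟨K, hK, hKX.trans subset_union_left, he⟩, heX⟩
  · rintro ⟨⟨K, hK, hKX, he⟩, heX⟩
    refine ⟨heX, K, hK, fun f hf => ?_, he⟩
    rcases hKX hf with hfX | rfl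
    exacts [hfX, heX]

lemma subset_compl_union_singleton_and_smallestIn_iff :
    K ⊆ Xᶜ ∪ {e} ∧ SmallestIn e K ↔ e ∈ K ∧ Disjoint K ((X ∪ Iio e) \ {e}) := by
  simp only [SmallestIn, subset_def, Set.disjoint_left, mem_union, mem_compl_iff,
    mem_singleton_iff, mem_sdiff, mem_Iio]
  constructor
  · rintro ⟨hKX, heK, hmin⟩
    refine ⟨heK, fun f hf ⟨hfX, hfe⟩ => hfX.elim (fun h => ?_) fun h => (hmin f hf).not_gt h⟩
    exact (hKX f hf).elim (· h) hfe
  · rintro ⟨heK, hdis⟩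
    refine ⟨fun f hf => ?_, heK, fun f hf => ?_⟩
    · by_cases hfe : f = e
      · exact Or.inr hfe
      · exact Or.inl fun hfX => hdis hf ⟨Or.inl hfX, hfe⟩
    · by_contra! hlt
      exact hdis hf ⟨Or.inr hlt, hlt.ne⟩

lemma mem_activeSet_iff (hE : M.E = univ) :
    e ∈ ActiveSet M X ↔ e ∉ M.closure ((X ∪ Iio e) \ {e}) := by
  rw [Matroid.notMem_closure_iff_exists_isCocircuit (hE ▸ mem_univ e)]
  simp only [ActiveSet, mem_ofPred_eq, isCocircuit_iff_matroid_isCocircuit hE,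
    subset_compl_union_singleton_and_smallestIn_iff]

lemma activeSet_subset_of_spanning (hE : M.E = univ) (hB : M.Spanning B) :
    ActiveSet M B ⊆ B := by
  rintro e ⟨K, hK, hKB, -⟩
  obtain ⟨f, hfK, hfB⟩ :=
    hB.inter_isCocircuit_nonempty ((isCocircuit_iff_matroid_isCocircuit hE).1 hK)
  rcases hKB hfK with hf | rfl
  exacts [absurd hfB hf, hfB]

lemma activeSet_subset_activeSet [Finite α] (hE : M.E = univ)
    (hBA : B \ A ⊆ ActiveSet M A) : ActiveSet M A ⊆ ActiveSet M B := by
  intro e he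
  rw [mem_activeSet_iff hE] at he ⊢
  let s := ((B \ A) ∩ Ioi e).toFinite.toFinset
  refine fun hcl => M.notMem_closure_union_of_forall_notMem_closure he s (fun b hb => ?_)
    (M.closure_subset_closure ?_ hcl)
  · obtain ⟨hbBA, heb⟩ : b ∈ B \ A ∧ e < b := by simpa [s] using hb
    refine fun hcl => (mem_activeSet_iff hE).1 (hBA hbBA) (M.closure_subset_closure ?_ hcl)
    rintro x (rfl | ⟨hxA | hxe, -⟩ | hxb)
    · exact ⟨Or.inr heb, heb.ne⟩
    · exact ⟨Or.inl hxA, fun hxb => hbBA.2 (hxb ▸ hxA)⟩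
    · exact ⟨Or.inr (hxe.trans heb), (hxe.trans heb).ne⟩
    · exact ⟨Or.inr hxb, hxb.ne⟩
  · rintro x ⟨hxB | hxe, hxe'⟩
    · by_cases hxA : x ∈ A
      · exact Or.inl ⟨Or.inl hxA, hxe'⟩
      rcases lt_or_gt_of_ne hxe' with hlt | hgt
      · exact Or.inl ⟨Or.inr hlt, hxe'⟩
      · exact Or.inr (by simpa [s] using ⟨⟨hxB, hxA⟩, hgt⟩)
    · exact Or.inl ⟨Or.inr hxe, hxe'⟩

/-- A circuit through `a` meets this cocircuit only in `{a, b}`, so it must contain both, and then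
minimality of `a` in the circuit and of `b` in the cocircuit forces `a = b`. -/
lemma Perspective.notMem_of_mem_extSet (h : Perspective M M') {a b : α} (hK : IsCocircuit M' K)
    (hKB : K ⊆ Bᶜ ∪ {b}) (hb : SmallestIn b K) (ha : a ∈ ExtSet M B) : a ∉ K := by
  intro haK
  obtain ⟨haB, C, hC, hCB, haC, ha_min⟩ := ha
  obtain ⟨x, ⟨hxC, hxK⟩, hxa⟩ : ∃ x ∈ C ∩ K, x ≠ a := by
    by_contra! hCK
    have hCK : C ∩ K = {a} := eq_singleton_iff_unique_mem.2 ⟨⟨haC, haK⟩, hCK⟩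
    exact h C K hC hK (by rw [hCK, ncard_singleton])
  have hxB : x ∈ B := (hCB hxC).resolve_right hxa
  obtain rfl : x = b := (hKB hxK).resolve_left (not_not_intro hxB)
  exact haB (le_antisymm (ha_min x hxC) (hb.2 a haK) ▸ hxB)

lemma Perspective.activeSet_subset (h : Perspective M M') (hA : A ⊆ B ∪ ExtSet M B) :
    ActiveSet M' B ⊆ ActiveSet M' A := by
  rintro e ⟨K, hK, hKB, he⟩
  refine ⟨K, hK, fun y hyK => ?_, he⟩
  rcases hKB hyK with hyB | rfl
  · refine Or.inl fun hyA => (hA hyA).elim hyB fun hyExt => ?_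
    exact h.notMem_of_mem_extSet hK hKB he hyExt hyK
  · exact Or.inr rfl

end ActiveSet

theorem interval_IntSet_Pset_general {α : Type*} [Fintype α] [LinearOrder α]
    (M M' : Matroid α) (hE' : M'.E = Set.univ)
    (h : Perspective M M') (B A : Set α)
    (hBs : M'.Spanning B)
    (hA1 : B \ IntSet M' B ⊆ A) (hA2 : A ⊆ B ∪ ExtSet M B) :
    IntSet M' A = IntSet M' B ∩ A ∧ Pset M' A = IntSet M' B \ A := by
  have hBA : ActiveSet M' B ⊆ ActiveSet M' A := h.activeSet_subset hA2
  have hB_sub : B \ A ⊆ ActiveSet M' A := fun b hb => by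
    have hbI : b ∈ IntSet M' B := by_contra fun hbI => hb.2 (hA1 ⟨hb.1, hbI⟩)
    exact hBA (intSet_eq_activeSet_inter.subset hbI).1
  have hS : ActiveSet M' A = ActiveSet M' B :=
    (activeSet_subset_activeSet hE' hB_sub).antisymm hBA
  have hSB : ActiveSet M' B ∩ B = ActiveSet M' B :=
    inter_eq_left.2 (activeSet_subset_of_spanning hE' hBs)
  simp only [intSet_eq_activeSet_inter, pset_eq_activeSet_diff, hS, hSB, and_self]

theorem interval_IntSet_Pset {α : Type*} [Fintype α] [LinearOrder α]
    (M M' : Matroid α) (hE : M.E = Set.univ) (hE' : M'.E = Set.univ)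
    (h : Perspective M M') (B A : Set α)
    (hBi : M.Indep B) (hBs : M'.Spanning B)
    (hA1 : B \ IntSet M' B ⊆ A) (hA2 : A ⊆ B ∪ ExtSet M B) :
    IntSet M' A = IntSet M' B ∩ A ∧ Pset M' A = IntSet M' B \ A :=
  interval_IntSet_Pset_general M M' hE' h B A hBs hA1 hA2
end
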